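/- Let M be a locally finite metric space, and suppose that for every C > 0 there exists a Lipschitz map f : M → L₁ such that every subset U ⊆ M × M with sup_{(x,y)∈U} d_M(x,y) = ∞ satisfies sup_{(x,y)∈U} ‖f(x) − f(y)‖ > C · Lip(f). Then M admits a coarse embedding into L₁. (Contrapositive: if M is not coarsely embeddable into L₁, then there is a constant C such that every Lipschitz f : M → L₁ admits pairs (x,y) with d_M(x,y) arbitrarily large but ‖f(x) − f(y)‖ ≤ C · Lip(f).) -/

import Mathlib

/-!
Applying the hypothesis with `C = (n + 1) 2ⁿ⁺¹` and rescaling gives `1`-Lipschitz maps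
`vₙ : M → L₁` with `‖vₙ x - vₙ y‖ > (n + 1) 2ⁿ⁺¹` as soon as `d(x, y) ≥ Rₙ`. Placing a copy of `vₙ`,
shrunk by `2⁻ⁿ⁻¹`, on the dyadic interval `(1 - 2⁻ⁿ, 1 - 2⁻ⁿ⁻¹)` glues them into one map
`g : M → L₁(0, 1)` with `‖g x - g y‖ = ∑ₙ 2⁻ⁿ⁻¹ ‖vₙ x - vₙ y‖`. So `g` is `1`-Lipschitz and
`‖g x - g y‖ > n + 1` as soon as `d(x, y) ≥ Rₙ`, i.e. its compression modulus tends to infinity.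
-/

open MeasureTheory

/-- The Lebesgue space `L₁(0,1)` (modeled as `L₁` of the interval `(0,1)` with
Lebesgue measure). -/
noncomputable abbrev SpaceL1 : Type :=
  MeasureTheory.Lp ℝ 1 (MeasureTheory.volume.restrict (Set.Ioo (0:ℝ) 1))

open Set Filter Function
open scoped ENNReal NNReal

section Thresholds

variable {M : Type*} [PseudoMetricSpace M]

lemma exists_forall_le_dist_of_forall_unbounded {P : M → M → Prop}
    (h : ∀ U : Set (M × M), (∀ R : ℝ, ∃ p ∈ U, R ≤ dist p.1 p.2) → ∃ p ∈ U, P p.1 p.2) :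
    ∃ R : ℝ, ∀ x y, R ≤ dist x y → P x y := by
  by_contra! hP
  obtain ⟨p, hp, hPp⟩ := h {p | ¬ P p.1 p.2} fun R =>
    let ⟨x, y, hxy, hnP⟩ := hP R
    ⟨(x, y), hnP, hxy⟩
  exact hp hPp

lemma exists_lipschitzWith_one_of_mul_lt_norm_sub {E : Type*} [NormedAddCommGroup E]
    [NormedSpace ℝ E] {f : M → E} {L : ℝ≥0} (hf : LipschitzWith L f) (x₀ : M) {C R : ℝ}
    (hR : ∀ x y, R ≤ dist x y → C * L < ‖f x - f y‖) :
    ∃ v : M → E, LipschitzWith 1 v ∧ v x₀ = 0 ∧ ∀ x y, R ≤ dist x y → C < ‖v x - v y‖ := by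
  rcases eq_or_ne L 0 with rfl | hL
  · -- a `0`-Lipschitz map is constant, so no pair is `R` apart
    refine ⟨0, LipschitzWith.const' 0, rfl, fun x y hxy => absurd (hR x y hxy) ?_⟩
    simpa [← dist_eq_norm] using hf.dist_le_mul x y
  have hL' : (0 : ℝ) < L := by positivity
  have hsub : ∀ x y, (L : ℝ)⁻¹ • (f x - f x₀) - (L : ℝ)⁻¹ • (f y - f x₀)
      = (L : ℝ)⁻¹ • (f x - f y) := fun x y => by rw [← smul_sub, sub_sub_sub_cancel_right]
  refine ⟨fun x => (L : ℝ)⁻¹ • (f x - f x₀), LipschitzWith.of_dist_le_mul fun x y => ?_,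
    by simp, fun x y hxy => ?_⟩
  · rw [dist_eq_norm, hsub, norm_smul, norm_inv, NNReal.norm_eq, NNReal.coe_one, one_mul,
      inv_mul_le_iff₀ hL', ← dist_eq_norm]
    exact hf.dist_le_mul x y
  · rw [hsub, norm_smul, norm_inv, NNReal.norm_eq, lt_inv_mul_iff₀ hL', mul_comm]
    exact hR x y hxy

end Thresholds

section Compression

variable {M N : Type*} [PseudoMetricSpace M] [PseudoMetricSpace N]

/-- `inf {dist (g x) (g y) | s ≤ dist x y}`, with `s` itself thrown into the infimum so that it is
not the junk value `sInf ∅ = 0` when no pair of points is `s` apart. -/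
noncomputable def compressionModulus (g : M → N) (s : ℝ) : ℝ :=
  sInf (insert s {r | ∃ x y, s ≤ dist x y ∧ dist (g x) (g y) = r})

lemma compressionModulus_dist_le (g : M → N) (x y : M) :
    compressionModulus g (dist x y) ≤ dist (g x) (g y) := by
  refine csInf_le (BddBelow.insert _ ⟨0, ?_⟩) (mem_insert_of_mem _ ⟨x, y, le_rfl, rfl⟩)
  rintro _ ⟨x', y', -, rfl⟩
  exact dist_nonneg

lemma tendsto_compressionModulus {g : M → N}
    (hg : ∀ C : ℝ, ∃ R : ℝ, ∀ x y, R ≤ dist x y → C ≤ dist (g x) (g y)) :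
    Tendsto (compressionModulus g) atTop atTop := by
  refine tendsto_atTop_atTop.2 fun C => ?_
  obtain ⟨R, hR⟩ := hg C
  refine ⟨max R C, fun s hs => le_csInf (insert_nonempty _ _) ?_⟩
  rintro _ (rfl | ⟨x, y, hxy, rfl⟩)
  · exact le_of_max_le_right hs
  · exact hR x y ((le_max_left _ _).trans (hs.trans hxy))

end Compression

namespace MeasureTheory

/-- Gluing along such copies embeds the `scale`-weighted `ℓ¹`-sum of copies of `L¹(ν)`
isometrically into `L¹(μ)` (`DisjointCopies.edist_toLp_glue`). -/
structure DisjointCopies {α β : Type*} [MeasurableSpace α] [MeasurableSpace β]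
    (μ : Measure α) (ν : Measure β) where
  set : ℕ → Set α
  map : ℕ → α → β
  scale : ℕ → ℝ≥0
  measurableSet_set : ∀ n, MeasurableSet (set n)
  pairwise_disjoint_set : Pairwise (Disjoint on set)
  measurableEmbedding_map : ∀ n, MeasurableEmbedding (map n)
  map_restrict_set : ∀ n, (μ.restrict (set n)).map (map n) = (scale n : ℝ≥0∞) • ν

namespace DisjointCopies

variable {α β E : Type*} [MeasurableSpace α] [MeasurableSpace β] {μ : Measure α} {ν : Measure β}
  [NormedAddCommGroup E] (D : DisjointCopies μ ν)

noncomputable def glue (g : ℕ → β → E) (t : α) : E :=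
  ∑' n, (D.set n).indicator (g n ∘ D.map n) t

lemma glue_apply_of_mem {g : ℕ → β → E} {m : ℕ} {t : α} (ht : t ∈ D.set m) :
    D.glue g t = g m (D.map m t) := by
  rw [glue, tsum_eq_single m fun n hn =>
    indicator_of_notMem ((D.pairwise_disjoint_set hn).symm.notMem_of_mem_left ht) _]
  exact indicator_of_mem ht _

lemma glue_apply_of_notMem {g : ℕ → β → E} {t : α} (ht : t ∉ ⋃ n, D.set n) : D.glue g t = 0 := by
  simp only [mem_iUnion, not_exists] at ht
  simp [glue, indicator_of_notMem (ht _)]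

lemma support_glue_subset (g : ℕ → β → E) : support (D.glue g) ⊆ ⋃ n, D.set n :=
  fun _ ht => by_contra fun h => ht (D.glue_apply_of_notMem h)

lemma glue_sub (g g' : ℕ → β → E) : D.glue (g - g') = D.glue g - D.glue g' := by
  ext t
  by_cases ht : t ∈ ⋃ n, D.set n
  · obtain ⟨m, hm⟩ := mem_iUnion.mp ht
    simp [D.glue_apply_of_mem hm]
  · simp [D.glue_apply_of_notMem ht]

lemma lintegral_enorm_glue (g : ℕ → β → E) :
    ∫⁻ t, ‖D.glue g t‖ₑ ∂μ = ∑' n, D.scale n * ∫⁻ s, ‖g n s‖ₑ ∂ν := by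
  rw [← setLIntegral_eq_of_support_subset (f := fun t => ‖D.glue g t‖ₑ)
      ((support_comp_subset enorm_zero _).trans (D.support_glue_subset g)),
    lintegral_iUnion D.measurableSet_set D.pairwise_disjoint_set]
  refine tsum_congr fun n => ?_
  rw [setLIntegral_congr_fun (D.measurableSet_set n) fun t ht => by rw [D.glue_apply_of_mem ht],
    ← (D.measurableEmbedding_map n).lintegral_map (fun s => ‖g n s‖ₑ), D.map_restrict_set,
    lintegral_smul_measure, smul_eq_mul]

lemma aestronglyMeasurable_glue {g : ℕ → β → E} (hg : ∀ n, AEStronglyMeasurable (g n) ν) :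
    AEStronglyMeasurable (D.glue g) μ := by
  rw [← indicator_eq_self.mpr (D.support_glue_subset g),
    aestronglyMeasurable_indicator_iff (MeasurableSet.iUnion D.measurableSet_set),
    aestronglyMeasurable_iUnion_iff]
  intro n
  have hcomp : AEStronglyMeasurable (g n ∘ D.map n) (μ.restrict (D.set n)) := by
    rw [← (D.measurableEmbedding_map n).aestronglyMeasurable_map_iff, D.map_restrict_set]
    exact (hg n).smul_measure _
  exact hcomp.congr <| (ae_restrict_mem (D.measurableSet_set n)).mono fun t ht =>
    (D.glue_apply_of_mem ht).symm

lemma memLp_glue (u : ℕ → Lp E 1 ν) (hu : ∑' n, D.scale n * ‖u n‖ₑ ≠ ∞) :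
    MemLp (D.glue fun n => u n) 1 μ := by
  refine ⟨D.aestronglyMeasurable_glue fun n => Lp.aestronglyMeasurable (u n), ?_⟩
  simpa [eLpNorm_one_eq_lintegral_enorm, D.lintegral_enorm_glue, Lp.enorm_def] using hu.lt_top

lemma edist_toLp_glue {u w : ℕ → Lp E 1 ν} (hu : MemLp (D.glue fun n => u n) 1 μ)
    (hw : MemLp (D.glue fun n => w n) 1 μ) :
    edist (hu.toLp _) (hw.toLp _) = ∑' n, D.scale n * edist (u n) (w n) := by
  rw [Lp.edist_toLp_toLp, ← glue_sub, eLpNorm_one_eq_lintegral_enorm, lintegral_enorm_glue]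
  simp_rw [Lp.edist_def, eLpNorm_one_eq_lintegral_enorm]
  rfl

theorem exists_lipschitzWith_scale_mul_dist_le (hD : ∑' n, (D.scale n : ℝ≥0∞) ≤ 1)
    {M : Type*} [PseudoMetricSpace M] {K : ℝ≥0} (v : ℕ → M → Lp E 1 ν)
    (hv : ∀ n, LipschitzWith K (v n)) (x₀ : M) (hx₀ : ∀ n, v n x₀ = 0) :
    ∃ g : M → Lp E 1 μ, LipschitzWith K g ∧
      ∀ n x y, D.scale n * dist (v n x) (v n y) ≤ dist (g x) (g y) := by
  have hsum : ∀ x y, ∑' n, D.scale n * edist (v n x) (v n y) ≤ K * edist x y := fun x y =>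
    calc ∑' n, D.scale n * edist (v n x) (v n y)
        ≤ ∑' n, D.scale n * (K * edist x y) :=
          ENNReal.tsum_le_tsum fun n => mul_le_mul_right ((hv n).edist_le_mul x y) _
      _ = (∑' n, (D.scale n : ℝ≥0∞)) * (K * edist x y) := ENNReal.tsum_mul_right
      _ ≤ K * edist x y := mul_le_of_le_one_left zero_le hD
  have hmem : ∀ x, MemLp (D.glue fun n => v n x) 1 μ := fun x =>
    D.memLp_glue _ <| ne_top_of_le_ne_top
      (ENNReal.mul_ne_top ENNReal.coe_ne_top (edist_ne_top x x₀))
      (by simpa [hx₀, edist_zero_right] using hsum x x₀)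
  let g : M → Lp E 1 μ := fun x => (hmem x).toLp _
  have hg : ∀ x y, edist (g x) (g y) = ∑' n, D.scale n * edist (v n x) (v n y) :=
    fun x y => D.edist_toLp_glue _ _
  refine ⟨g, fun x y => (hg x y).trans_le (hsum x y), fun n x y => ?_⟩
  have hle : (D.scale n : ℝ≥0∞) * edist (v n x) (v n y) ≤ edist (g x) (g y) :=
    (hg x y).symm ▸ ENNReal.le_tsum n
  rw [edist_nndist, edist_nndist, ← ENNReal.coe_mul, ENNReal.coe_le_coe] at hle
  exact_mod_cast hle

end DisjointCopies

end MeasureTheory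

section Dyadic

lemma measurableEmbedding_mul_sub {a c : ℝ} (hc : c ≠ 0) :
    MeasurableEmbedding fun t => c * (t - a) :=
  (measurableEmbedding_mulLeft₀ hc).comp (measurableEmbedding_subRight a)

lemma map_mul_sub_restrict_Ioo {a c : ℝ} (hc : 0 < c) :
    Measure.map (fun t => c * (t - a)) (volume.restrict (Ioo a (a + c⁻¹)))
      = ENNReal.ofReal c⁻¹ • volume.restrict (Ioo (0 : ℝ) 1) := by
  have hpre : (fun t => c * (t - a)) ⁻¹' Ioo 0 1 = Ioo a (a + c⁻¹) := by
    ext t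
    simp only [mem_preimage, mem_Ioo, mul_pos_iff_of_pos_left hc, sub_pos, ← lt_div_iff₀' hc,
      one_div, sub_lt_iff_lt_add']
  have hmap : Measure.map (fun t => c * (t - a)) volume = ENNReal.ofReal c⁻¹ • volume := by
    have hcomp : (fun t => c * (t - a)) = (c * ·) ∘ (· + -a) := by
      ext t; simp [sub_eq_add_neg]
    rw [hcomp, ← Measure.map_map (measurable_const_mul c) (measurable_add_const _),
      map_add_right_eq_self, Real.map_volume_mul_left hc.ne', abs_of_pos (inv_pos.2 hc)]
  rw [← hpre, ← (measurableEmbedding_mul_sub hc.ne').restrict_map, hmap, Measure.restrict_smul]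

lemma one_sub_inv_two_pow_succ (n : ℕ) :
    1 - (2 : ℝ)⁻¹ ^ (n + 1) = 1 - 2⁻¹ ^ n + ((2 : ℝ) ^ (n + 1))⁻¹ := by
  rw [inv_pow, pow_succ, mul_inv, inv_pow]
  ring

noncomputable def dyadicCopies :
    DisjointCopies (volume.restrict (Ioo (0 : ℝ) 1)) (volume.restrict (Ioo (0 : ℝ) 1)) where
  set n := Ioo (1 - 2⁻¹ ^ n) (1 - 2⁻¹ ^ (n + 1))
  map n t := 2 ^ (n + 1) * (t - (1 - 2⁻¹ ^ n))
  scale n := 2⁻¹ ^ (n + 1)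
  measurableSet_set _ := measurableSet_Ioo
  pairwise_disjoint_set := Monotone.pairwise_disjoint_on_Ioo_succ fun _ _ hmn =>
    sub_le_sub_left (pow_le_pow_of_le_one (by norm_num) (by norm_num) hmn) 1
  measurableEmbedding_map _ := measurableEmbedding_mul_sub (by positivity)
  map_restrict_set n := by
    have hsub : Ioo (1 - (2 : ℝ)⁻¹ ^ n) (1 - 2⁻¹ ^ (n + 1)) ⊆ Ioo 0 1 :=
      Ioo_subset_Ioo (sub_nonneg.2 (pow_le_one₀ (by norm_num) (by norm_num)))
        (sub_le_self _ (by positivity))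
    rw [Measure.restrict_restrict_of_subset hsub, one_sub_inv_two_pow_succ,
      map_mul_sub_restrict_Ioo (by positivity), ← ENNReal.ofReal_coe_nnreal]
    push_cast
    rw [inv_pow]

lemma tsum_dyadicCopies_scale : ∑' n, (dyadicCopies.scale n : ℝ≥0∞) = 1 := by
  simp only [dyadicCopies, ENNReal.coe_pow, ENNReal.coe_inv two_ne_zero, ENNReal.coe_ofNat]
  rw [ENNReal.tsum_geometric_add_one, ENNReal.one_sub_inv_two, inv_inv,
    ENNReal.inv_mul_cancel two_ne_zero ENNReal.ofNat_ne_top]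

end Dyadic

theorem coarseEmbedding_into_L1_of_no_compression {M : Type*} [MetricSpace M]
    (h : ∀ C : ℝ, 0 < C → ∃ (f : M → SpaceL1) (L : NNReal), LipschitzWith L f ∧
      ∀ U : Set (M × M), (∀ R : ℝ, ∃ p ∈ U, R ≤ dist p.1 p.2) →
        ∃ p ∈ U, C * L < ‖f p.1 - f p.2‖) :
    ∃ g : M → SpaceL1, ∃ ρ₁ ρ₂ : ℝ → ℝ,
      (∀ x y : M, ρ₁ (dist x y) ≤ ‖g x - g y‖ ∧ ‖g x - g y‖ ≤ ρ₂ (dist x y)) ∧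
      Filter.Tendsto ρ₁ Filter.atTop Filter.atTop := by
  rcases isEmpty_or_nonempty M with _ | ⟨⟨x₀⟩⟩
  · exact ⟨0, id, id, fun x => isEmptyElim x, tendsto_id⟩
  -- the constant `(n + 1) 2ⁿ⁺¹` undoes the weight `2⁻ⁿ⁻¹` of the `n`-th dyadic copy
  have hv : ∀ n : ℕ, ∃ (v : M → SpaceL1) (R : ℝ), LipschitzWith 1 v ∧ v x₀ = 0 ∧
      ∀ x y, R ≤ dist x y → ((n : ℝ) + 1) * 2 ^ (n + 1) < ‖v x - v y‖ := fun n => by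
    obtain ⟨f, L, hf, hfU⟩ := h (((n : ℝ) + 1) * 2 ^ (n + 1)) (by positivity)
    obtain ⟨R, hR⟩ := exists_forall_le_dist_of_forall_unbounded
      (P := fun x y => ((n : ℝ) + 1) * 2 ^ (n + 1) * L < ‖f x - f y‖) hfU
    obtain ⟨v, hv⟩ := exists_lipschitzWith_one_of_mul_lt_norm_sub hf x₀ hR
    exact ⟨v, R, hv⟩
  choose v R hv hv₀ hvR using hv
  obtain ⟨g, hg, hgv⟩ := dyadicCopies.exists_lipschitzWith_scale_mul_dist_le
    tsum_dyadicCopies_scale.le v hv x₀ hv₀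
  refine ⟨g, compressionModulus g, id, fun x y => ?_,
    tendsto_compressionModulus fun C => ⟨R ⌈C⌉₊, fun x y hxy => ?_⟩⟩
  · rw [← dist_eq_norm]
    exact ⟨compressionModulus_dist_le g x y, by simpa using hg.dist_le_mul x y⟩
  · set n := ⌈C⌉₊
    calc C ≤ n + 1 := (Nat.le_ceil C).trans (le_add_of_nonneg_right zero_le_one)
      _ = 2⁻¹ ^ (n + 1) * ((n + 1) * 2 ^ (n + 1)) := by
        rw [inv_pow, mul_left_comm, inv_mul_cancel₀ (by positivity), mul_one]
      _ ≤ 2⁻¹ ^ (n + 1) * dist (v n x) (v n y) := by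
        rw [dist_eq_norm]
        gcongr
        exact (hvR n x y hxy).le
      _ ≤ dist (g x) (g y) := by simpa [dyadicCopies] using hgv n x y
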